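/- arXiv:1602.02085 — 2 statements merged into one kernel-verified Lean document; each statement's English description precedes it below -/
import Mathlib

section
/- Let n ≥ 1 and let λ = (λ₁, …, λₙ) and μ = (μ₁, …, μₙ) be weakly decreasing sequences of nonnegative integers with μᵢ ≤ λᵢ for all 1 ≤ i ≤ n and μᵢ ≤ λ_{i+1} for all 1 ≤ i ≤ n−1 (so that the skew Young diagram λ/μ is connected). Then the number N(λ/μ) of minimal (monotone) lattice paths on ℤ² contained in the skew Young diagram λ/μ from its southwestern corner to its northeastern corner, i.e. N(λ/μ) = #{(b₁, …, bₙ) ∈ ℤⁿ : b₁ ≥ b₂ ≥ … ≥ bₙ and μᵢ ≤ bᵢ ≤ λᵢ for all i}, satisfies N(λ/μ) = det(M) where M is the n×n matrix with (i,j)-entry the binomial coefficient C(λⱼ − μᵢ + 1, j − i + 1). -/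
/-- Integer binomial coefficient with the convention `C(m, k) = 0` whenever
`k < 0` or `k > m`. -/
def intChoose (m k : ℤ) : ℤ :=
  if 0 ≤ k ∧ k ≤ m then (m.toNat.choose k.toNat : ℤ) else 0



lemma intChoose_of_neg {m k : ℤ} (h : k < 0) : intChoose m k = 0 := by
  simp [intChoose]; omega

lemma intChoose_of_gt {m k : ℤ} (h : m < k) : intChoose m k = 0 := by
  simp [intChoose]; omega

lemma intChoose_zero {m : ℤ} (h : 0 ≤ m) : intChoose m 0 = 1 := by
  simp [intChoose, h]

lemma intChoose_one {m : ℤ} (h : 0 ≤ m) : intChoose m 1 = m := by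
  have h1 : m.toNat.choose 1 = m.toNat := Nat.choose_one_right _
  simp only [intChoose]
  rcases lt_or_ge m 1 with h2 | h2
  · have : m = 0 := by omega
    subst this; norm_num
  · rw [if_pos ⟨by norm_num, h2⟩]
    simp only [Int.toNat_one, h1]
    omega

lemma intChoose_pascal {m k : ℤ} (hm : 0 ≤ m) :
    intChoose (m + 1) k = intChoose m k + intChoose m (k - 1) := by
  rcases lt_or_ge k 0 with hk | hk
  · rw [intChoose_of_neg hk, intChoose_of_neg hk, intChoose_of_neg (by omega)]; norm_num
  rcases eq_or_lt_of_le hk with hk0 | hk1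
  · subst hk0
    rw [intChoose_zero (by omega), intChoose_zero hm, intChoose_of_neg (by norm_num)]
    norm_num
  -- 1 ≤ k
  rcases lt_or_ge m k with h2 | h2
  · rcases eq_or_lt_of_le (by omega : m + 1 ≤ k) with h3 | h3
    · -- k = m + 1
      rw [intChoose_of_gt (by omega : m < k)]
      have e1 : intChoose (m+1) k = 1 := by
        rw [intChoose, if_pos ⟨hk, by omega⟩, h3]
        simp [Nat.choose_self]
      have e2 : intChoose m (k-1) = 1 := by
        rw [intChoose, if_pos ⟨by omega, by omega⟩, show (k-1).toNat = m.toNat by omega]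
        simp [Nat.choose_self]
      rw [e1, e2]; ring
    · rw [intChoose_of_gt h3, intChoose_of_gt h2,
        intChoose_of_gt (by omega : m < k - 1)]
      norm_num
  · -- 1 ≤ k ≤ m
    simp only [intChoose, if_pos (⟨by omega, by omega⟩ : 0 ≤ k ∧ k ≤ m + 1),
      if_pos (⟨hk, h2⟩ : 0 ≤ k ∧ k ≤ m), if_pos (⟨by omega, by omega⟩ : (0:ℤ) ≤ k - 1 ∧ k - 1 ≤ m)]
    have e1 : (m + 1).toNat = m.toNat + 1 := by omega
    have e2 : k.toNat = (k - 1).toNat + 1 := by omega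
    rw [e1, e2, Nat.choose_succ_succ]
    push_cast
    ring



def Dmat (n : ℕ) (lam mu : ℕ → ℕ) : Matrix (Fin n) (Fin n) ℤ :=
  fun i j => intChoose ((lam (j:ℕ) : ℤ) - (mu (i:ℕ) : ℤ) + 1) (((j:ℕ):ℤ) - ((i:ℕ):ℤ) + 1)

lemma Dmat_det_peel (m : ℕ) (lam mu : ℕ → ℕ)
    (hlam : ∀ j, j < m+1 → lam j ≤ lam 0) (heq : lam 0 = mu 0) :
    (Dmat (m+1) lam mu).det = (Dmat m (fun i => lam (i+1)) (fun i => mu (i+1))).det := by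
  rw [Matrix.det_succ_row_zero, Finset.sum_eq_single 0]
  · have h00 : Dmat (m+1) lam mu 0 0 = 1 := by
      have : ((lam 0 : ℤ) - (mu 0 : ℤ) + 1) = 1 := by rw [heq]; ring
      simp only [Dmat, Fin.val_zero]
      norm_num [this, intChoose_one]
    rw [h00, Fin.succAbove_zero]
    simp only [Fin.val_zero, pow_zero, one_mul]
    congr 1
    ext i j
    simp only [Matrix.submatrix_apply, Dmat, Fin.val_succ]
    congr 1 <;> push_cast <;> ring
  · intro j _ hj
    have hj1 : 1 ≤ (j:ℕ) := by
      rcases Nat.eq_zero_or_pos (j:ℕ) with h | h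
      · exact absurd (Fin.ext h : j = 0) hj
      · exact h
    have hz : Dmat (m+1) lam mu 0 j = 0 := by
      apply intChoose_of_gt
      have := hlam j j.isLt
      have : (lam (j:ℕ) : ℤ) ≤ (lam 0 : ℤ) := by exact_mod_cast this
      simp only [Fin.val_zero]
      push_cast
      omega
    rw [hz]; ring
  · intro h; exact absurd (Finset.mem_univ 0) h

lemma Dmat_det_col0 (m : ℕ) (lam lam1 mu : ℕ → ℕ)
    (h1 : ∀ j, 1 ≤ j → j < m+1 → lam1 j = lam j) (h0 : lam1 0 + 1 = lam 0)
    (hm : ∀ i, i < m+1 → mu i ≤ lam 0) :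
    (Dmat (m+1) lam mu).det = (Dmat (m+1) lam1 mu).det
      + (Dmat m (fun i => lam (i+1)) (fun i => mu (i+1))).det := by
  set A := Dmat (m+1) lam1 mu with hA
  have key : Dmat (m+1) lam mu
      = A.updateCol 0 ((fun i => A i 0) + (Pi.single (0 : Fin (m+1)) (1:ℤ))) := by
    ext i j
    rcases eq_or_ne j 0 with rfl | hj
    · rw [Matrix.updateCol_self]
      simp only [Pi.add_apply]
      have hmi : (0:ℤ) ≤ (lam1 0 : ℤ) - (mu (i:ℕ) : ℤ) + 1 := by
        have := hm i i.isLt; omega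
      have hsplit : ((lam 0 : ℤ) - (mu (i:ℕ) : ℤ) + 1)
          = ((lam1 0 : ℤ) - (mu (i:ℕ) : ℤ) + 1) + 1 := by
        have : (lam1 0 : ℤ) + 1 = (lam 0 : ℤ) := by exact_mod_cast h0
        omega
      simp only [hA, Dmat, Fin.val_zero, Nat.cast_zero]
      rw [hsplit, intChoose_pascal hmi]
      congr 1
      rcases eq_or_ne i 0 with rfl | hi
      · simp only [Fin.val_zero, Nat.cast_zero]
        rw [show ((0:ℤ) - 0 + 1 - 1) = 0 by ring, intChoose_zero (by simpa using hmi)]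
        simp
      · have hi1 : 1 ≤ (i:ℕ) := by
          rcases Nat.eq_zero_or_pos (i:ℕ) with h | h
          · exact absurd (Fin.ext h : i = 0) hi
          · exact h
        rw [intChoose_of_neg (by push_cast; omega)]
        rw [Pi.single_eq_of_ne hi]
    · rw [Matrix.updateCol_ne hj]
      have hj1 : 1 ≤ (j:ℕ) := by
        rcases Nat.eq_zero_or_pos (j:ℕ) with h | h
        · exact absurd (Fin.ext h : j = 0) hj
        · exact h
      simp only [Dmat, hA, h1 (j:ℕ) hj1 j.isLt]
  rw [key, Matrix.det_updateCol_add]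
  congr 1
  · rw [Matrix.updateCol_eq_self]
  · rw [Matrix.det_succ_column_zero, Finset.sum_eq_single 0]
    · rw [Matrix.updateCol_self]
      simp only [Pi.single_eq_same, Fin.val_zero, pow_zero, one_mul, Fin.succAbove_zero]
      congr 1
      ext i j
      simp only [Matrix.submatrix_apply]
      rw [Matrix.updateCol_ne (Fin.succ_ne_zero j)]
      simp only [Dmat, Fin.val_succ, hA]
      rw [h1 ((j:ℕ)+1) (by omega) (by omega)]
      congr 1 <;> push_cast <;> ring
    · intro i _ hi
      rw [Matrix.updateCol_self, Pi.single_eq_of_ne hi]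
      ring
    · intro h; exact absurd (Finset.mem_univ 0) h

lemma Dmat_det_dec (m t : ℕ) (ht1 : 1 ≤ t) (htm : t < m+1) (lam lam' mu : ℕ → ℕ)
    (hdiff : ∀ j, j ≠ t → lam' j = lam j)
    (ht : lam t = lam' t + 1) (hprev : lam (t-1) = lam' t)
    (hmu : ∀ i, i < m+1 → mu i ≤ lam' t) :
    (Dmat (m+1) lam mu).det = (Dmat (m+1) lam' mu).det := by
  set A := Dmat (m+1) lam' mu with hA
  set tt : Fin (m+1) := ⟨t, htm⟩ with htt
  set t1 : Fin (m+1) := ⟨t-1, by omega⟩ with ht1'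
  have hne : t1 ≠ tt := by
    simp only [ht1', htt, Ne, Fin.mk.injEq]
    omega
  have key : Dmat (m+1) lam mu
      = A.updateCol tt ((fun i => A i tt) + (fun i => A i t1)) := by
    ext i j
    rcases eq_or_ne j tt with rfl | hj
    · rw [Matrix.updateCol_self]
      simp only [Pi.add_apply]
      have hmi : (0:ℤ) ≤ (lam' t : ℤ) - (mu (i:ℕ) : ℤ) + 1 := by
        have := hmu i i.isLt; omega
      have hsplit : ((lam (tt:ℕ) : ℤ) - (mu (i:ℕ) : ℤ) + 1)
          = ((lam' t : ℤ) - (mu (i:ℕ) : ℤ) + 1) + 1 := by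
        simp only [htt]
        have : (lam t : ℤ) = (lam' t : ℤ) + 1 := by exact_mod_cast ht
        omega
      simp only [Dmat]
      rw [hsplit, intChoose_pascal hmi]
      have e1 : A i tt = intChoose ((lam' t : ℤ) - (mu (i:ℕ) : ℤ) + 1)
          (((tt:ℕ):ℤ) - ((i:ℕ):ℤ) + 1) := by
        simp only [hA, Dmat, htt]
      have e2 : A i t1 = intChoose ((lam' t : ℤ) - (mu (i:ℕ) : ℤ) + 1)
          (((tt:ℕ):ℤ) - ((i:ℕ):ℤ) + 1 - 1) := by
        simp only [hA, Dmat, ht1', htt]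
        rw [hdiff (t-1) (by omega), hprev]
        congr 1
        have hc : ((t-1:ℕ):ℤ) = (t:ℤ) - 1 := by omega
        rw [hc]; ring
      rw [e1, e2]
    · rw [Matrix.updateCol_ne hj]
      have : (j:ℕ) ≠ t := by
        intro h; exact hj (by simp [htt, Fin.ext_iff, h])
      simp only [Dmat, hA, hdiff (j:ℕ) this]
  rw [key, Matrix.det_updateCol_add]
  have h2 : (A.updateCol tt fun i => A i t1).det = 0 := by
    apply Matrix.det_zero_of_column_eq hne
    intro k
    rw [Matrix.updateCol_ne hne, Matrix.updateCol_self]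
  rw [Matrix.updateCol_eq_self, h2, add_zero]

def Sset (n : ℕ) (lam mu : ℕ → ℕ) : Set (Fin n → ℤ) :=
  {b | Antitone b ∧ ∀ i : Fin n, (mu (i:ℕ) : ℤ) ≤ b i ∧ b i ≤ (lam (i:ℕ) : ℤ)}

lemma Sset_finite (n : ℕ) (lam mu : ℕ → ℕ) : (Sset n lam mu).Finite := by
  apply Set.Finite.subset
    (Set.Finite.pi (fun i : Fin n => Set.finite_Icc ((mu (i:ℕ) : ℤ)) ((lam (i:ℕ) : ℤ))))
  intro b hb
  simp only [Set.mem_pi, Set.mem_univ, forall_true_left, Set.mem_Icc]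
  intro i
  exact ⟨(hb.2 i).1, (hb.2 i).2⟩

lemma Sset_zero (lam mu : ℕ → ℕ) : (Sset 0 lam mu).ncard = 1 := by
  have : Sset 0 lam mu = Set.univ := by
    ext b
    simp only [Sset, Set.mem_setOf_eq, Set.mem_univ, iff_true]
    exact ⟨fun i j _ => i.elim0, fun i => i.elim0⟩
  rw [this, Set.ncard_univ]
  exact Nat.card_unique

lemma antitone_cases {m : ℕ} (x : ℤ) (c : Fin m → ℤ) (hc : Antitone c)
    (hx : ∀ j : Fin m, c j ≤ x) : Antitone (Fin.cases x c : Fin (m+1) → ℤ) := by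
  intro i j hij
  induction j using Fin.cases with
  | zero =>
    have : i = 0 := le_antisymm hij (Fin.zero_le i)
    subst this
    exact le_refl _
  | succ j =>
    induction i using Fin.cases with
    | zero => simpa using hx j
    | succ i =>
      simp only [Fin.cases_succ]
      exact hc (by rwa [Fin.succ_le_succ_iff] at hij)

lemma count_peel (m : ℕ) (lam mu : ℕ → ℕ) (hpeel : lam 0 = mu 0)
    (hlam : ∀ j, j < m + 1 → lam j ≤ lam 0) :
    (Sset (m+1) lam mu).ncard = (Sset m (fun i => lam (i+1)) (fun i => mu (i+1))).ncard := by
  have himg : (fun b : Fin (m+1) → ℤ => b ∘ Fin.succ) '' Sset (m+1) lam mu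
      = Sset m (fun i => lam (i+1)) (fun i => mu (i+1)) := by
    ext c
    constructor
    · rintro ⟨b, ⟨hb1, hb2⟩, rfl⟩
      refine ⟨hb1.comp_monotone (Fin.strictMono_succ.monotone), fun i => ?_⟩
      simpa [Fin.val_succ] using hb2 i.succ
    · rintro ⟨hc1, hc2⟩
      refine ⟨Fin.cases ((mu 0 : ℤ)) c, ⟨?_, ?_⟩, ?_⟩
      · apply antitone_cases _ _ hc1
        intro j
        calc c j ≤ ((lam ((j:ℕ)+1) : ℕ) : ℤ) := (hc2 j).2
        _ ≤ ((lam 0 : ℕ) : ℤ) := by exact_mod_cast hlam ((j:ℕ)+1) (by omega)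
        _ = ((mu 0 : ℕ) : ℤ) := by rw [hpeel]
      · intro i
        induction i using Fin.cases with
        | zero => simp [hpeel]
        | succ i => simpa [Fin.val_succ] using hc2 i
      · funext i
        simp [Fin.cases_succ]
  have hinj : Set.InjOn (fun b : Fin (m+1) → ℤ => b ∘ Fin.succ) (Sset (m+1) lam mu) := by
    intro b1 h1 b2 h2 he
    funext i
    induction i using Fin.cases with
    | zero =>
      have e1 : b1 0 = ((mu 0 : ℕ) : ℤ) := by
        have := (h1.2 0).1
        have := (h1.2 0).2
        have hc : ((lam 0 : ℕ) : ℤ) = ((mu 0 : ℕ) : ℤ) := by exact_mod_cast hpeel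
        simp only [Fin.val_zero] at *
        omega
      have e2 : b2 0 = ((mu 0 : ℕ) : ℤ) := by
        have := (h2.2 0).1
        have := (h2.2 0).2
        have hc : ((lam 0 : ℕ) : ℤ) = ((mu 0 : ℕ) : ℤ) := by exact_mod_cast hpeel
        simp only [Fin.val_zero] at *
        omega
      rw [e1, e2]
    | succ i => exact congrFun he i
  rw [← himg, Set.ncard_image_of_injOn hinj]

lemma count_split (m r : ℕ) (lam mu : ℕ → ℕ) (hr1 : 1 ≤ r) (hrm : r ≤ m + 1)
    (hrun : ∀ i, i < r → lam i = lam 0) (hlt : mu 0 < lam 0)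
    (hlam : ∀ j, j < m + 1 → lam j ≤ lam 0) :
    (Sset (m+1) lam mu).ncard
      = (Sset (m+1) (fun i => if i < r then lam 0 - 1 else lam i) mu).ncard
        + (Sset m (fun i => lam (i+1)) (fun i => mu (i+1))).ncard := by
  set lamr := fun i => if i < r then lam 0 - 1 else lam i with hlamr
  set T : Set (Fin (m+1) → ℤ) := {b ∈ Sset (m+1) lam mu | b 0 = ((lam 0 : ℕ) : ℤ)} with hT
  have hcast : ((lam 0 - 1 : ℕ) : ℤ) = ((lam 0 : ℕ) : ℤ) - 1 := by omega
  have hU : Sset (m+1) lam mu = Sset (m+1) lamr mu ∪ T := by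
    ext b
    constructor
    · rintro ⟨hb1, hb2⟩
      rcases eq_or_lt_of_le (hb2 0).2 with heq | hlt'
      · right
        exact ⟨⟨hb1, hb2⟩, by simpa using heq⟩
      · left
        refine ⟨hb1, fun i => ⟨(hb2 i).1, ?_⟩⟩
        by_cases hi : (i:ℕ) < r
        · have : b i ≤ b 0 := hb1 (Fin.zero_le i)
          have h0 : b 0 < ((lam 0 : ℕ) : ℤ) := by simpa using hlt'
          simp only [hlamr, if_pos hi, hcast]
          omega
        · simpa only [hlamr, if_neg hi] using (hb2 i).2
    · rintro (⟨hb1, hb2⟩ | ⟨hb, _⟩)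
      · refine ⟨hb1, fun i => ⟨(hb2 i).1, le_trans (hb2 i).2 ?_⟩⟩
        by_cases hi : (i:ℕ) < r
        · simp only [hlamr, if_pos hi]
          have := hrun (i:ℕ) hi
          omega
        · simp only [hlamr, if_neg hi]
          exact le_refl _
      · exact hb
  have hdisj : Disjoint (Sset (m+1) lamr mu) T := by
    rw [Set.disjoint_left]
    rintro b ⟨hb1, hb2⟩ ⟨hb', he⟩
    have h2 := (hb2 0).2
    simp only [Fin.val_zero, hlamr, if_pos (show 0 < r from hr1), hcast] at h2
    rw [he] at h2
    omega
  have hTcard : T.ncard = (Sset m (fun i => lam (i+1)) (fun i => mu (i+1))).ncard := by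
    have himg : (fun b : Fin (m+1) → ℤ => b ∘ Fin.succ) '' T
        = Sset m (fun i => lam (i+1)) (fun i => mu (i+1)) := by
      ext c
      constructor
      · rintro ⟨b, ⟨⟨hb1, hb2⟩, _⟩, rfl⟩
        refine ⟨hb1.comp_monotone (Fin.strictMono_succ.monotone), fun i => ?_⟩
        simpa [Fin.val_succ] using hb2 i.succ
      · rintro ⟨hc1, hc2⟩
        refine ⟨Fin.cases ((lam 0 : ℕ) : ℤ) c, ⟨⟨?_, ?_⟩, by simp⟩, ?_⟩
        · apply antitone_cases _ _ hc1
          intro j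
          calc c j ≤ ((lam ((j:ℕ)+1) : ℕ) : ℤ) := (hc2 j).2
          _ ≤ ((lam 0 : ℕ) : ℤ) := by exact_mod_cast hlam ((j:ℕ)+1) (by omega)
        · intro i
          induction i using Fin.cases with
          | zero =>
            simp only [Fin.cases_zero, Fin.val_zero]
            constructor
            · exact_mod_cast le_of_lt hlt
            · exact le_refl _
          | succ i => simpa [Fin.val_succ] using hc2 i
        · funext i
          simp [Fin.cases_succ]
    have hinj : Set.InjOn (fun b : Fin (m+1) → ℤ => b ∘ Fin.succ) T := by
      intro b1 h1 b2 h2 he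
      funext i
      induction i using Fin.cases with
      | zero => rw [h1.2, h2.2]
      | succ i => exact congrFun he i
    rw [← himg, Set.ncard_image_of_injOn hinj]
  rw [hU, Set.ncard_union_eq hdisj (Sset_finite _ _ _)
    ((Sset_finite (m+1) lam mu).subset (Set.sep_subset _ _)), hTcard]

def lamT (lam : ℕ → ℕ) (t : ℕ) : ℕ → ℕ := fun i => if i < t then lam 0 - 1 else lam i

lemma kreweras_aux (k : ℕ) : ∀ (n : ℕ) (lam mu : ℕ → ℕ),
    n + (∑ i ∈ Finset.range n, (lam i - mu i)) ≤ k →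
    (∀ i j, i ≤ j → j < n → lam j ≤ lam i) →
    (∀ i j, i ≤ j → j < n → mu j ≤ mu i) →
    (∀ i, i < n → mu i ≤ lam i) →
    (∀ i, i + 1 < n → mu i ≤ lam (i+1)) →
    ((Sset n lam mu).ncard : ℤ) = (Dmat n lam mu).det := by
  induction k with
  | zero =>
    intro n lam mu hk _ _ _ _
    have hn : n = 0 := by omega
    subst hn
    rw [Sset_zero, Matrix.det_isEmpty]
    norm_num
  | succ k IH =>
    intro n lam mu hk hlam hmu hsub hconn
    cases n with
    | zero => rw [Sset_zero, Matrix.det_isEmpty]; norm_num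
    | succ m =>
      have hsum : (∑ i ∈ Finset.range (m+1), (lam i - mu i))
          = (∑ i ∈ Finset.range m, (lam (i+1) - mu (i+1))) + (lam 0 - mu 0) :=
        Finset.sum_range_succ' _ m
      have tlam : ∀ i j, i ≤ j → j < m → lam (j+1) ≤ lam (i+1) :=
        fun i j h hj => hlam (i+1) (j+1) (by omega) (by omega)
      have tmu : ∀ i j, i ≤ j → j < m → mu (j+1) ≤ mu (i+1) :=
        fun i j h hj => hmu (i+1) (j+1) (by omega) (by omega)
      have tsub : ∀ i, i < m → mu (i+1) ≤ lam (i+1) :=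
        fun i hi => hsub (i+1) (by omega)
      have tconn : ∀ i, i + 1 < m → mu (i+1) ≤ lam (i+1+1) :=
        fun i hi => hconn (i+1) (by omega)
      have hlam0 : ∀ j, j < m + 1 → lam j ≤ lam 0 :=
        fun j hj => hlam 0 j (Nat.zero_le _) hj
      have hsub0 : mu 0 ≤ lam 0 := hsub 0 (by omega)
      by_cases hpe : lam 0 = mu 0
      · -- peel the first row
        rw [count_peel m lam mu hpe hlam0, Dmat_det_peel m lam mu hlam0 hpe]
        exact IH m _ _ (by omega) tlam tmu tsub tconn
      · have hlt : mu 0 < lam 0 := lt_of_le_of_ne hsub0 (Ne.symm hpe)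
        have hex : ∃ t, ¬ (t < m + 1 ∧ lam t = lam 0) :=
          ⟨m+1, fun h => absurd h.1 (lt_irrefl _)⟩
        set r := Nat.find hex with hrdef
        have hrun : ∀ i, i < r → (i < m + 1 ∧ lam i = lam 0) :=
          fun i hi => not_not.mp (Nat.find_min hex hi)
        have hr1 : 1 ≤ r := by
          by_contra h
          have h0 : r = 0 := by omega
          have hs := Nat.find_spec hex
          rw [← hrdef, h0] at hs
          exact hs ⟨by omega, rfl⟩
        have hrm : r ≤ m + 1 := Nat.find_le (fun h => absurd h.1 (lt_irrefl _))
        have hrlam : r < m + 1 → lam r < lam 0 := by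
          intro h
          have hspec := Nat.find_spec hex
          have h1 : lam r ≠ lam 0 := fun he => hspec ⟨h, he⟩
          have h2 : lam r ≤ lam 0 := hlam0 r h
          omega
        -- the decremented shape
        have hmu0 : ∀ i, i < m + 1 → mu i ≤ mu 0 :=
          fun i hi => hmu 0 i (Nat.zero_le _) hi
        have hmm : ∀ i, i < m + 1 → mu i ≤ lam 0 :=
          fun i hi => le_trans (hmu0 i hi) hsub0
        -- count recursion
        have hc : (Sset (m+1) lam mu).ncard
            = (Sset (m+1) (lamT lam r) mu).ncard
              + (Sset m (fun i => lam (i+1)) (fun i => mu (i+1))).ncard :=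
          count_split m r lam mu hr1 hrm (fun i hi => (hrun i hi).2) hlt hlam0
        -- determinant recursion
        have hd : (Dmat (m+1) lam mu).det
            = (Dmat (m+1) (lamT lam 1) mu).det
              + (Dmat m (fun i => lam (i+1)) (fun i => mu (i+1))).det := by
          apply Dmat_det_col0 m lam (lamT lam 1) mu
          · intro j hj1 hj2
            simp only [lamT, if_neg (by omega : ¬ j < 1)]
          · simp only [lamT, if_pos (by omega : (0:ℕ) < 1)]
            omega
          · exact hmm
        have step : ∀ t, 1 ≤ t → t + 1 ≤ r →
            (Dmat (m+1) (lamT lam t) mu).det = (Dmat (m+1) (lamT lam (t+1)) mu).det := by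
          intro t h1t htr
          have htm1 : t < m + 1 := by
            have := (hrun t (by omega)).1
            omega
          apply Dmat_det_dec m t h1t htm1 (lamT lam t) (lamT lam (t+1)) mu
          · intro j hj
            by_cases h : j < t
            · simp only [lamT, if_pos h, if_pos (by omega : j < t + 1)]
            · simp only [lamT, if_neg h, if_neg (by omega : ¬ j < t + 1)]
          · have e0 := (hrun t (by omega)).2
            simp only [lamT, if_neg (lt_irrefl t), if_pos (by omega : t < t + 1)]
            omega
          · simp only [lamT, if_pos (by omega : t - 1 < t), if_pos (by omega : t < t + 1)]
          · intro i hi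
            simp only [lamT, if_pos (by omega : t < t + 1)]
            have := hmu0 i hi
            omega
        have chain : ∀ d t, 1 ≤ t → t + d = r →
            (Dmat (m+1) (lamT lam t) mu).det = (Dmat (m+1) (lamT lam r) mu).det := by
          intro d
          induction d with
          | zero =>
            intro t h1t he
            rw [show t = r by omega]
          | succ d IHd =>
            intro t h1t he
            rw [step t h1t (by omega)]
            exact IHd (t+1) (by omega) (by omega)
        have hchain := chain (r-1) 1 (le_refl 1) (by omega)
        -- measure for the decremented shape
        have harea : (∑ i ∈ Finset.range (m+1), (lamT lam r i - mu i))
            < ∑ i ∈ Finset.range (m+1), (lam i - mu i) := by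
          apply Finset.sum_lt_sum
          · intro i hi
            by_cases h : i < r
            · have := (hrun i h).2
              simp only [lamT, if_pos h]
              omega
            · simp only [lamT, if_neg h]
              exact le_rfl
          · refine ⟨0, Finset.mem_range.mpr (by omega), ?_⟩
            simp only [lamT, if_pos (show 0 < r from hr1)]
            omega
        -- IH for the decremented shape
        have ihr : ((Sset (m+1) (lamT lam r) mu).ncard : ℤ)
            = (Dmat (m+1) (lamT lam r) mu).det := by
          apply IH (m+1) (lamT lam r) mu (by omega)
          · intro i j hij hj
            by_cases h : j < r
            · simp only [lamT, if_pos h, if_pos (by omega : i < r)]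
              exact le_rfl
            · by_cases h2 : i < r
              · simp only [lamT, if_neg h, if_pos h2]
                have h3 : lam r < lam 0 := hrlam (by omega)
                have h4 : lam j ≤ lam r := hlam r j (by omega) hj
                omega
              · simp only [lamT, if_neg h, if_neg h2]
                exact hlam i j hij hj
          · exact hmu
          · intro i hi
            by_cases h : i < r
            · simp only [lamT, if_pos h]
              have := hmu0 i hi
              omega
            · simp only [lamT, if_neg h]
              exact hsub i hi
          · intro i hi
            by_cases h : i + 1 < r
            · simp only [lamT, if_pos h]
              have := hmu0 i (by omega)
              omega
            · simp only [lamT, if_neg h]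
              exact hconn i hi
        have iht : ((Sset m (fun i => lam (i+1)) (fun i => mu (i+1))).ncard : ℤ)
            = (Dmat m (fun i => lam (i+1)) (fun i => mu (i+1))).det :=
          IH m _ _ (by omega) tlam tmu tsub tconn
        rw [hc, hd, hchain]
        push_cast
        rw [ihr, iht]

/-- **Kreweras's theorem.** For a connected skew shape `λ/μ`, the number of minimal
lattice paths in `λ/μ` from its southwestern to its northeastern corner (counted via
the sequences `b₁ ≥ … ≥ bₙ` with `μᵢ ≤ bᵢ ≤ λᵢ`) equals
`det (C(λⱼ − μᵢ + 1, j − i + 1))`. -/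
theorem kreweras_path_counting (n : ℕ) (hn : 1 ≤ n) (lam mu : Fin n → ℕ)
    (hlam : Antitone lam) (hmu : Antitone mu)
    (hsub : ∀ i : Fin n, mu i ≤ lam i)
    (hconn : ∀ i : Fin n, (h : (i : ℕ) + 1 < n) → mu i ≤ lam ⟨(i : ℕ) + 1, h⟩) :
    (({b : Fin n → ℤ | Antitone b ∧ ∀ i : Fin n,
        (mu i : ℤ) ≤ b i ∧ b i ≤ (lam i : ℤ)}.ncard : ℤ)) =
    Matrix.det (fun i j : Fin n =>
      intChoose ((lam j : ℤ) - (mu i : ℤ) + 1) (((j : ℕ) : ℤ) - ((i : ℕ) : ℤ) + 1)) := by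
  set lam' : ℕ → ℕ := fun i => if h : i < n then lam ⟨i, h⟩ else 0 with hlam'
  set mu' : ℕ → ℕ := fun i => if h : i < n then mu ⟨i, h⟩ else 0 with hmu'
  have hl : ∀ i : Fin n, lam' (i:ℕ) = lam i := by
    intro i
    simp only [hlam', dif_pos i.isLt, Fin.eta]
  have hm : ∀ i : Fin n, mu' (i:ℕ) = mu i := by
    intro i
    simp only [hmu', dif_pos i.isLt, Fin.eta]
  have hset : {b : Fin n → ℤ | Antitone b ∧ ∀ i : Fin n,
      (mu i : ℤ) ≤ b i ∧ b i ≤ (lam i : ℤ)} = Sset n lam' mu' := by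
    ext b
    simp only [Sset, Set.mem_setOf_eq, hl, hm]
  have hmat : (fun i j : Fin n =>
      intChoose ((lam j : ℤ) - (mu i : ℤ) + 1) (((j : ℕ) : ℤ) - ((i : ℕ) : ℤ) + 1))
      = Dmat n lam' mu' := by
    funext i j
    simp only [Dmat, hl, hm]
  rw [hset, hmat]
  apply kreweras_aux (n + ∑ i ∈ Finset.range n, (lam' i - mu' i)) n lam' mu' (le_refl _)
  · intro i j hij hj
    have hi : i < n := lt_of_le_of_lt hij hj
    simp only [hlam', dif_pos hj, dif_pos hi]
    exact hlam (show (⟨i, hi⟩ : Fin n) ≤ ⟨j, hj⟩ from hij)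
  · intro i j hij hj
    have hi : i < n := lt_of_le_of_lt hij hj
    simp only [hmu', dif_pos hj, dif_pos hi]
    exact hmu (show (⟨i, hi⟩ : Fin n) ≤ ⟨j, hj⟩ from hij)
  · intro i hi
    simp only [hlam', hmu', dif_pos hi]
    exact hsub ⟨i, hi⟩
  · intro i hi
    simp only [hlam', hmu', dif_pos (by omega : i < n), dif_pos hi]
    exact hconn ⟨i, by omega⟩ hi
end

section
/- Let n ≥ 1 and let λ = (λ₁, …, λₙ) and μ = (μ₁, …, μₙ) be weakly decreasing sequences of nonnegative integers with μᵢ ≤ λᵢ for all 1 ≤ i ≤ n and μᵢ ≤ λ_{i+1} for all 1 ≤ i ≤ n−1. For 1 ≤ i ≤ n set uᵢ = (μᵢ − i, i) and vᵢ = (λᵢ − i, i + 1) in ℤ². Then the number of n-tuples (P₁, …, Pₙ) of pairwise vertex-disjoint monotone lattice paths with Pᵢ going from uᵢ to vᵢ equals the number N(λ/μ) of minimal lattice paths contained in the skew Young diagram λ/μ from its southwestern corner to its northeastern corner; equivalently, both counts equal #{(b₁, …, bₙ) ∈ ℤⁿ : b₁ ≥ b₂ ≥ … ≥ bₙ and μᵢ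 ≤ bᵢ ≤ λᵢ for all i}. -/
/-- `p` is a monotone lattice path on `ℤ²` from `u` to `v`: a finite sequence of
lattice points starting at `u`, ending at `v`, each consecutive difference being a
unit east step `(1,0)` or a unit north step `(0,1)`. -/
def IsMonotoneLatticePath (u v : ℤ × ℤ) (p : List (ℤ × ℤ)) : Prop :=
  p.head? = some u ∧ p.getLast? = some v ∧
    List.Chain' (fun a b : ℤ × ℤ => b - a = (1, 0) ∨ b - a = (0, 1)) p

/-!
A monotone path from `(a, h)` to `(c, h + 1)` is a hook: it runs east along height `h`, takes its
single north step at some abscissa `t ∈ [a, c]`, and runs east along height `h + 1`. Hence a family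
of paths `uᵢ → vᵢ` is determined by the abscissas of its north steps, `bᵢ - i` (in 1-based
notation; below, `i : Fin n` stands for row `i + 1`). Paths `i` and `j` can only meet if
`j = i + 1`, at height `i + 1`, where path `i` covers `[bᵢ - i, λᵢ - i]` and path `i + 1` covers
`[μᵢ₊₁ - i - 1, bᵢ₊₁ - i - 1]`. As `μᵢ₊₁ ≤ λᵢ₊₁ ≤ λᵢ`, these are disjoint iff `bᵢ₊₁ ≤ bᵢ`.
-/

theorem sub_eq_east_iff {x y : ℤ × ℤ} : y - x = (1, 0) ↔ y = (x.1 + 1, x.2) := by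
  simp only [Prod.ext_iff, Prod.fst_sub, Prod.snd_sub]
  omega

theorem sub_eq_north_iff {x y : ℤ × ℤ} : y - x = (0, 1) ↔ y = (x.1, x.2 + 1) := by
  simp only [Prod.ext_iff, Prod.fst_sub, Prod.snd_sub]
  omega

namespace IsMonotoneLatticePath

theorem iff_isChain {u v : ℤ × ℤ} {p : List (ℤ × ℤ)} :
    IsMonotoneLatticePath u v p ↔ p.head? = some u ∧ p.getLast? = some v ∧
      p.IsChain (fun a b : ℤ × ℤ => b - a = (1, 0) ∨ b - a = (0, 1)) :=
  Iff.rfl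

theorem singleton (u : ℤ × ℤ) : IsMonotoneLatticePath u u [u] :=
  ⟨rfl, rfl, List.isChain_singleton u⟩

theorem singleton_iff {u v x : ℤ × ℤ} : IsMonotoneLatticePath u v [x] ↔ x = u ∧ x = v := by
  simp [iff_isChain, eq_comm]

theorem not_nil (u v : ℤ × ℤ) : ¬IsMonotoneLatticePath u v [] := by
  simp [IsMonotoneLatticePath]

theorem cons_cons_iff {u v x y : ℤ × ℤ} {t : List (ℤ × ℤ)} :
    IsMonotoneLatticePath u v (x :: y :: t) ↔
      x = u ∧ (y - x = (1, 0) ∨ y - x = (0, 1)) ∧ IsMonotoneLatticePath y v (y :: t) := by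
  simp only [iff_isChain, List.isChain_cons_cons, List.head?_cons,
    List.getLast?_cons_cons, Option.some.injEq, true_and]
  tauto

theorem cons {u y v : ℤ × ℤ} {p : List (ℤ × ℤ)} (hp : IsMonotoneLatticePath y v p)
    (hstep : y - u = (1, 0) ∨ y - u = (0, 1)) : IsMonotoneLatticePath u v (u :: p) := by
  obtain _ | ⟨x, t⟩ := p
  · exact absurd hp (not_nil y v)
  · obtain rfl : x = y := Option.some_injective _ hp.1
    exact cons_cons_iff.2 ⟨rfl, hstep, hp⟩

theorem append {u v w z : ℤ × ℤ} {p q : List (ℤ × ℤ)} (hp : IsMonotoneLatticePath u v p)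
    (hq : IsMonotoneLatticePath w z q) (hstep : w - v = (1, 0) ∨ w - v = (0, 1)) :
    IsMonotoneLatticePath u z (p ++ q) := by
  have hp₀ : p ≠ [] := by rintro rfl; exact not_nil u v hp
  have hq₀ : q ≠ [] := by rintro rfl; exact not_nil w z hq
  refine ⟨by rw [List.head?_append_of_ne_nil _ hp₀, hp.1],
    by rw [List.getLast?_append_of_ne_nil _ hq₀, hq.2.1], hp.2.2.append hq.2.2 ?_⟩
  rintro x hx y hy
  rw [hp.2.1, Option.mem_some_iff] at hx
  rw [hq.1, Option.mem_some_iff] at hy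
  rwa [← hx, ← hy]

theorem snd_le {u v : ℤ × ℤ} {p : List (ℤ × ℤ)} (hp : IsMonotoneLatticePath u v p) :
    u.2 ≤ v.2 := by
  induction p generalizing u with
  | nil => exact absurd hp (not_nil u v)
  | cons x t ih =>
    obtain _ | ⟨y, t⟩ := t
    · obtain ⟨rfl, rfl⟩ := singleton_iff.1 hp
      rfl
    · obtain ⟨rfl, hstep, hrest⟩ := cons_cons_iff.1 hp
      have := ih hrest
      rcases hstep with h | h <;> simp only [Prod.ext_iff, Prod.snd_sub] at h <;> omega

end IsMonotoneLatticePath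

def horizPath (a h : ℤ) : ℕ → List (ℤ × ℤ)
  | 0 => [(a, h)]
  | m + 1 => (a, h) :: horizPath (a + 1) h m

theorem mem_horizPath {x : ℤ × ℤ} {a h : ℤ} {m : ℕ} :
    x ∈ horizPath a h m ↔ x.2 = h ∧ a ≤ x.1 ∧ x.1 ≤ a + m := by
  induction m generalizing a with
  | zero => simp only [horizPath, List.mem_singleton, Prod.ext_iff]; omega
  | succ m ih => simp only [horizPath, List.mem_cons, ih, Prod.ext_iff]; omega

theorem isMonotoneLatticePath_horizPath (a h : ℤ) (m : ℕ) :
    IsMonotoneLatticePath (a, h) (a + m, h) (horizPath a h m) := by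
  induction m generalizing a with
  | zero => simpa [horizPath] using IsMonotoneLatticePath.singleton (a, h)
  | succ m ih =>
    have := (ih (a + 1)).cons (u := (a, h)) (Or.inl (by simp))
    rwa [add_assoc, add_comm 1, ← Nat.cast_succ] at this

theorem IsMonotoneLatticePath.eq_horizPath {a c h : ℤ} {p : List (ℤ × ℤ)}
    (hp : IsMonotoneLatticePath (a, h) (c, h) p) : ∃ m : ℕ, c = a + m ∧ p = horizPath a h m := by
  induction p generalizing a with
  | nil => exact absurd hp (not_nil _ _)
  | cons x t ih =>
    obtain _ | ⟨y, t⟩ := t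
    · obtain ⟨rfl, hx⟩ := singleton_iff.1 hp
      exact ⟨0, by simp_all, rfl⟩
    · obtain ⟨rfl, hstep, hrest⟩ := cons_cons_iff.1 hp
      rw [sub_eq_east_iff, sub_eq_north_iff] at hstep
      rcases hstep with rfl | rfl
      · obtain ⟨m, rfl, hm⟩ := ih hrest
        exact ⟨m + 1, by push_cast; ring, by rw [hm, horizPath]⟩
      · exact absurd hrest.snd_le (by simp)

def hookPath (a t c h : ℤ) : List (ℤ × ℤ) :=
  horizPath a h (t - a).toNat ++ horizPath t (h + 1) (c - t).toNat

theorem mem_hookPath {x : ℤ × ℤ} {a t c h : ℤ} (hat : a ≤ t) (htc : t ≤ c) :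
    x ∈ hookPath a t c h ↔
      (x.2 = h ∧ a ≤ x.1 ∧ x.1 ≤ t) ∨ (x.2 = h + 1 ∧ t ≤ x.1 ∧ x.1 ≤ c) := by
  rw [hookPath, List.mem_append, mem_horizPath, mem_horizPath, Int.toNat_of_nonneg (by omega),
    Int.toNat_of_nonneg (by omega), add_sub_cancel, add_sub_cancel]

theorem isMonotoneLatticePath_hookPath {a t c h : ℤ} (hat : a ≤ t) (htc : t ≤ c) :
    IsMonotoneLatticePath (a, h) (c, h + 1) (hookPath a t c h) := by
  have horiz₁ := isMonotoneLatticePath_horizPath a h (t - a).toNat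
  have horiz₂ := isMonotoneLatticePath_horizPath t (h + 1) (c - t).toNat
  rw [Int.toNat_of_nonneg (by omega), add_sub_cancel] at horiz₁ horiz₂
  exact horiz₁.append horiz₂ (Or.inr (by simp))

theorem hookPath_of_lt {a t c h : ℤ} (hat : a < t) :
    hookPath a t c h = (a, h) :: hookPath (a + 1) t c h := by
  obtain ⟨m, hm⟩ : ∃ m : ℕ, (t - a).toNat = m + 1 := ⟨(t - a).toNat - 1, by omega⟩
  rw [hookPath, hookPath, hm, horizPath, List.cons_append, show (t - (a + 1)).toNat = m by omega]

theorem IsMonotoneLatticePath.eq_hookPath {a c h : ℤ} {p : List (ℤ × ℤ)}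
    (hp : IsMonotoneLatticePath (a, h) (c, h + 1) p) :
    ∃ t, a ≤ t ∧ t ≤ c ∧ p = hookPath a t c h := by
  induction p generalizing a with
  | nil => exact absurd hp (not_nil _ _)
  | cons x rest ih =>
    obtain _ | ⟨y, rest⟩ := rest
    · obtain ⟨rfl, hx⟩ := singleton_iff.1 hp
      simp [Prod.ext_iff] at hx
    · obtain ⟨rfl, hstep, hrest⟩ := cons_cons_iff.1 hp
      rw [sub_eq_east_iff, sub_eq_north_iff] at hstep
      rcases hstep with rfl | rfl
      · obtain ⟨t, hat, htc, hrest⟩ := ih hrest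
        exact ⟨t, by omega, htc, by rw [hookPath_of_lt (by omega), hrest]⟩
      · obtain ⟨m, rfl, hm⟩ := hrest.eq_horizPath
        exact ⟨a, le_rfl, by omega, by simp [hookPath, horizPath, hm]⟩

theorem eq_of_hookPath_eq {a t t' c h : ℤ} (hat : a ≤ t) (htc : t ≤ c) (hat' : a ≤ t')
    (ht'c : t' ≤ c) (heq : hookPath a t c h = hookPath a t' c h) : t = t' := by
  have corner : ∀ s, a ≤ s → s ≤ c → (s, h) ∈ hookPath a s c h := fun s has hsc =>
    (mem_hookPath has hsc).2 (Or.inl ⟨rfl, has, le_rfl⟩)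
  have h₁ := (mem_hookPath hat' ht'c).1 (heq ▸ corner t hat htc)
  have h₂ := (mem_hookPath hat htc).1 (heq ▸ corner t' hat' ht'c)
  simp only [left_eq_add, one_ne_zero, false_and, or_false] at h₁ h₂
  omega

theorem disjoint_hookPath_iff {a t c a' t' c' h : ℤ} (hat : a ≤ t) (htc : t ≤ c)
    (hat' : a' ≤ t') (ht'c' : t' ≤ c') (ha'c : a' ≤ c) :
    (hookPath a t c h).Disjoint (hookPath a' t' c' (h + 1)) ↔ t' < t := by
  constructor
  · intro hdisj
    by_contra! htt'
    refine @hdisj (max t a', h + 1) ((mem_hookPath hat htc).2 (Or.inr ⟨rfl, le_max_left t a', ?_⟩))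
      ((mem_hookPath hat' ht'c').2 (Or.inl ⟨rfl, le_max_right t a', ?_⟩)) <;>
      simp only [max_le_iff] <;> omega
  · intro htt' x hx hx'
    rw [mem_hookPath hat htc] at hx
    rw [mem_hookPath hat' ht'c'] at hx'
    omega

theorem disjoint_hookPath_of_add_two_le {a t c a' t' c' h h' : ℤ} (hat : a ≤ t) (htc : t ≤ c)
    (hat' : a' ≤ t') (ht'c' : t' ≤ c') (hh : h + 2 ≤ h') :
    (hookPath a t c h).Disjoint (hookPath a' t' c' h') := by
  intro x hx hx'
  rw [mem_hookPath hat htc] at hx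
  rw [mem_hookPath hat' ht'c'] at hx'
  omega

theorem Fin.antitone_iff_le_of_val_eq_succ {α : Type*} [Preorder α] {n : ℕ} {f : Fin n → α} :
    Antitone f ↔ ∀ i j : Fin n, (j : ℕ) = i + 1 → f j ≤ f i := by
  cases n with
  | zero => exact ⟨fun _ i => i.elim0, fun _ i => i.elim0⟩
  | succ n =>
    rw [Fin.antitone_iff_succ_le]
    refine ⟨fun h i j hj => ?_, fun h i => h _ _ rfl⟩
    obtain ⟨k, rfl⟩ : ∃ k : Fin n, i = k.castSucc := ⟨⟨i, by omega⟩, rfl⟩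
    obtain rfl : j = k.succ := Fin.ext hj
    exact h k

section SkewShape

variable {n : ℕ} (mu lam : Fin n → ℕ)

def hookFamily (b : Fin n → ℤ) (i : Fin n) : List (ℤ × ℤ) :=
  hookPath ((mu i : ℤ) - (((i : ℕ) : ℤ) + 1)) (b i - (((i : ℕ) : ℤ) + 1))
    ((lam i : ℤ) - (((i : ℕ) : ℤ) + 1)) (((i : ℕ) : ℤ) + 1)

def stepSequences : Set (Fin n → ℤ) :=
  {b | Antitone b ∧ ∀ i, (mu i : ℤ) ≤ b i ∧ b i ≤ lam i}

def nonintersectingFamilies : Set (Fin n → List (ℤ × ℤ)) :=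
  {P | (∀ i, IsMonotoneLatticePath ((mu i : ℤ) - (((i : ℕ) : ℤ) + 1), ((i : ℕ) : ℤ) + 1)
      ((lam i : ℤ) - (((i : ℕ) : ℤ) + 1), ((i : ℕ) : ℤ) + 1 + 1) (P i)) ∧
    Pairwise fun i j => (P i).Disjoint (P j)}

variable {mu lam} {b : Fin n → ℤ}

theorem disjoint_hookFamily_iff (hlam : Antitone lam)
    (hb : ∀ i, (mu i : ℤ) ≤ b i ∧ b i ≤ lam i) {i j : Fin n} (hij : i < j) :
    (hookFamily mu lam b i).Disjoint (hookFamily mu lam b j) ↔ ((j : ℕ) = i + 1 → b j ≤ b i) := by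
  have hi := hb i
  have hj := hb j
  have hlamji : (lam j : ℤ) ≤ lam i := Int.ofNat_le.2 (hlam hij.le)
  rw [Fin.lt_def] at hij
  unfold hookFamily
  by_cases hsucc : (j : ℕ) = i + 1
  · have hheight : ((j : ℕ) : ℤ) + 1 = ((i : ℕ) : ℤ) + 1 + 1 := by omega
    rw [hheight, disjoint_hookPath_iff (by omega) (by omega) (by omega) (by omega) (by omega)]
    omega
  · refine iff_of_true (disjoint_hookPath_of_add_two_le (by omega) (by omega) (by omega)
      (by omega) (by omega)) (absurd · hsucc)

theorem pairwise_disjoint_hookFamily_iff (hlam : Antitone lam)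
    (hb : ∀ i, (mu i : ℤ) ≤ b i ∧ b i ≤ lam i) :
    (Pairwise fun i j => (hookFamily mu lam b i).Disjoint (hookFamily mu lam b j)) ↔
      Antitone b := by
  rw [Fin.antitone_iff_le_of_val_eq_succ]
  constructor
  · intro hdisj i j hj
    have hij : i < j := Fin.lt_def.2 (by omega)
    exact (disjoint_hookFamily_iff hlam hb hij).1 (hdisj hij.ne) hj
  · intro hsucc i j hne
    rcases hne.lt_or_gt with hij | hji
    · exact (disjoint_hookFamily_iff hlam hb hij).2 (hsucc i j)
    · exact ((disjoint_hookFamily_iff hlam hb hji).2 (hsucc j i)).symm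

theorem bijOn_hookFamily (hlam : Antitone lam) :
    Set.BijOn (hookFamily mu lam) (stepSequences mu lam) (nonintersectingFamilies mu lam) := by
  refine ⟨fun b ⟨hanti, hb⟩ => ⟨fun i => ?_, (pairwise_disjoint_hookFamily_iff hlam hb).2 hanti⟩,
    fun b ⟨_, hb⟩ b' ⟨_, hb'⟩ heq => funext fun i => ?_, fun P ⟨hpath, hdisj⟩ => ?_⟩
  · exact isMonotoneLatticePath_hookPath (by linarith [hb i]) (by linarith [hb i])
  · have := eq_of_hookPath_eq (by linarith [hb i]) (by linarith [hb i]) (by linarith [hb' i])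
      (by linarith [hb' i]) (congrFun heq i)
    linarith
  · choose t hat htc hP using fun i => (hpath i).eq_hookPath
    set b : Fin n → ℤ := fun i => t i + (((i : ℕ) : ℤ) + 1)
    have hb : ∀ i, (mu i : ℤ) ≤ b i ∧ b i ≤ lam i := fun i => by
      constructor <;> linarith [hat i, htc i]
    have hfam : hookFamily mu lam b = P := funext fun i => by
      simp only [hookFamily, b, add_sub_cancel_right, hP i]
    refine ⟨b, ⟨(pairwise_disjoint_hookFamily_iff hlam hb).1 ?_, hb⟩, hfam⟩
    rwa [hfam]

end SkewShape

theorem nonintersecting_paths_count_eq_skew_path_count_general (n : ℕ)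
    (lam mu : Fin n → ℕ) (hlam : Antitone lam) :
    {P : Fin n → List (ℤ × ℤ) |
        (∀ i : Fin n, IsMonotoneLatticePath
          ((mu i : ℤ) - (((i : ℕ) : ℤ) + 1), ((i : ℕ) : ℤ) + 1)
          ((lam i : ℤ) - (((i : ℕ) : ℤ) + 1), ((i : ℕ) : ℤ) + 2) (P i)) ∧
        (∀ i j : Fin n, i ≠ j → ∀ x : ℤ × ℤ, x ∈ P i → x ∉ P j)}.ncard =
    {b : Fin n → ℤ | Antitone b ∧ ∀ i : Fin n,
        (mu i : ℤ) ≤ b i ∧ b i ≤ (lam i : ℤ)}.ncard := by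
  change (nonintersectingFamilies mu lam).ncard = (stepSequences mu lam).ncard
  have hbij := bijOn_hookFamily (mu := mu) hlam
  rw [← hbij.image_eq, hbij.injOn.ncard_image]

/-- For a connected skew shape `λ/μ`, with starting points `uᵢ = (μᵢ − i, i)` and
ending points `vᵢ = (λᵢ − i, i + 1)`, the number of `n`-tuples of pairwise
vertex-disjoint monotone lattice paths `Pᵢ : uᵢ → vᵢ` equals the number `N(λ/μ)` of
minimal lattice paths in `λ/μ` from its southwestern to its northeastern corner,
i.e. the number of sequences `b₁ ≥ … ≥ bₙ` with `μᵢ ≤ bᵢ ≤ λᵢ`. (Indices are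
1-based; here `i : Fin n` stands for the (i+1)-st row.) -/
theorem nonintersecting_paths_count_eq_skew_path_count (n : ℕ) (hn : 1 ≤ n)
    (lam mu : Fin n → ℕ) (hlam : Antitone lam) (hmu : Antitone mu)
    (hsub : ∀ i : Fin n, mu i ≤ lam i)
    (hconn : ∀ i : Fin n, (h : (i : ℕ) + 1 < n) → mu i ≤ lam ⟨(i : ℕ) + 1, h⟩) :
    {P : Fin n → List (ℤ × ℤ) |
        (∀ i : Fin n, IsMonotoneLatticePath
          ((mu i : ℤ) - (((i : ℕ) : ℤ) + 1), ((i : ℕ) : ℤ) + 1)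
          ((lam i : ℤ) - (((i : ℕ) : ℤ) + 1), ((i : ℕ) : ℤ) + 2) (P i)) ∧
        (∀ i j : Fin n, i ≠ j → ∀ x : ℤ × ℤ, x ∈ P i → x ∉ P j)}.ncard =
    {b : Fin n → ℤ | Antitone b ∧ ∀ i : Fin n,
        (mu i : ℤ) ≤ b i ∧ b i ≤ (lam i : ℤ)}.ncard :=
  nonintersecting_paths_count_eq_skew_path_count_general n lam mu hlam
end
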